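/- Let Ξ̂ be the operator π(γ₂(Ξ)) = π(Ω_{o_p}) - π(Ω_{o_q}) - ((p-q)/(p+q))π(Ω_g). For f = h₁(x)h₂(y)ρ_y^μ Ψ_{κ₊}(ρ_xρ_y) with h₁ ∈ H^k(ℝ^p), h₂ ∈ H^l(ℝ^q), κ₊ = k + p/2, κ₋ = l + q/2, μ = (m + κ₊ - κ₋)/2 ∈ ℕ, and assuming the Casimir Ω_g acts on f by the scalar m(m+2) - (p+q)²/4 + (p+q), one has Ξ̂ f = λ f with λ = (κ₊ - κ₋)(κ₊ + κ₋ - 2) - ((p-q)/(p+q))·m(m+2). In particular λ = 0 when m = 0 (so that κ₊ = κ₋). -/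

import Mathlib

open MvPolynomial

noncomputable section

/-- Partial derivative in the i-th x-variable. -/
noncomputable def pdx {p q : ℕ} (i : Fin p) (F : (Fin p → ℝ) → (Fin q → ℝ) → ℝ) :
    (Fin p → ℝ) → (Fin q → ℝ) → ℝ :=
  fun x y => fderiv ℝ (fun x' => F x' y) x (Pi.single i 1)

/-- Partial derivative in the j-th y-variable. -/
noncomputable def pdy {p q : ℕ} (j : Fin q) (F : (Fin p → ℝ) → (Fin q → ℝ) → ℝ) :
    (Fin p → ℝ) → (Fin q → ℝ) → ℝ :=
  fun x y => fderiv ℝ (F x) y (Pi.single j 1)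

noncomputable def lapX {p q : ℕ} (F : (Fin p → ℝ) → (Fin q → ℝ) → ℝ) :
    (Fin p → ℝ) → (Fin q → ℝ) → ℝ :=
  fun x y => ∑ i : Fin p, pdx i (pdx i F) x y

noncomputable def lapY {p q : ℕ} (F : (Fin p → ℝ) → (Fin q → ℝ) → ℝ) :
    (Fin p → ℝ) → (Fin q → ℝ) → ℝ :=
  fun x y => ∑ j : Fin q, pdy j (pdy j F) x y

noncomputable def eulX {p q : ℕ} (F : (Fin p → ℝ) → (Fin q → ℝ) → ℝ) :
    (Fin p → ℝ) → (Fin q → ℝ) → ℝ :=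
  fun x y => ∑ i : Fin p, x i * pdx i F x y

noncomputable def eulY {p q : ℕ} (F : (Fin p → ℝ) → (Fin q → ℝ) → ℝ) :
    (Fin p → ℝ) → (Fin q → ℝ) → ℝ :=
  fun x y => ∑ j : Fin q, y j * pdy j F x y

/-- π(Ω_{o_p}) = E_x² + (p-2)E_x - r_x²Δ_x. -/
noncomputable def OmOp {p q : ℕ} (F : (Fin p → ℝ) → (Fin q → ℝ) → ℝ) :
    (Fin p → ℝ) → (Fin q → ℝ) → ℝ :=
  fun x y => eulX (eulX F) x y + ((p : ℝ) - 2) * eulX F x y -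
    (∑ i : Fin p, x i ^ 2) * lapX F x y

/-- π(Ω_{o_q}) = E_y² + (q-2)E_y - r_y²Δ_y. -/
noncomputable def OmOq {p q : ℕ} (F : (Fin p → ℝ) → (Fin q → ℝ) → ℝ) :
    (Fin p → ℝ) → (Fin q → ℝ) → ℝ :=
  fun x y => eulY (eulY F) x y + ((q : ℝ) - 2) * eulY F x y -
    (∑ j : Fin q, y j ^ 2) * lapY F x y

/-- E_x - E_y. -/
noncomputable def EmOp {p q : ℕ} (F : (Fin p → ℝ) → (Fin q → ℝ) → ℝ) :
    (Fin p → ℝ) → (Fin q → ℝ) → ℝ :=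
  fun x y => eulX F x y - eulY F x y

/-- π(Ω_g) = (E_x-E_y)² + (p-q)(E_x-E_y) - 2(E_x+E_y)
            - (r_x²r_y² + r_x²Δ_x + r_y²Δ_y + Δ_xΔ_y) - pq. -/
noncomputable def OmG {p q : ℕ} (F : (Fin p → ℝ) → (Fin q → ℝ) → ℝ) :
    (Fin p → ℝ) → (Fin q → ℝ) → ℝ :=
  fun x y => EmOp (EmOp F) x y + ((p : ℝ) - q) * EmOp F x y -
    2 * (eulX F x y + eulY F x y) -
    ((∑ i : Fin p, x i ^ 2) * (∑ j : Fin q, y j ^ 2) * F x y +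
      (∑ i : Fin p, x i ^ 2) * lapX F x y + (∑ j : Fin q, y j ^ 2) * lapY F x y +
      lapX (lapY F) x y) -
    (p : ℝ) * q * F x y

noncomputable def lapP {n : ℕ} (P : MvPolynomial (Fin n) ℝ) : MvPolynomial (Fin n) ℝ :=
  ∑ i : Fin n, pderiv i (pderiv i P)

/-- Ψ_α(u) = Σⱼ ((-1)ʲ/(j!(α)ⱼ))uʲ. -/
noncomputable def Psi (α : ℝ) (u : ℝ) : ℝ :=
  ∑' j : ℕ, ((-1) ^ j / ((j.factorial : ℝ) * (ascPochhammer ℝ j).eval α)) * u ^ j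

noncomputable def rhoX {p : ℕ} (x : Fin p → ℝ) : ℝ := (∑ i : Fin p, x i ^ 2) / 2

noncomputable def rhoY {q : ℕ} (y : Fin q → ℝ) : ℝ := (∑ j : Fin q, y j ^ 2) / 2

/-!
The operators `OmOp` and `OmOq` are the Casimir operators `E² + (n - 2)E - r²Δ` of the orthogonal
groups acting on the `x`- and `y`-variables. On a product `Q(v) g(|v|²/2)` of a harmonic
polynomial `Q`, homogeneous of degree `d`, with an arbitrary radial `C²` factor, this operator acts
by the scalar `d(d + n - 2)`: `E` and `Δ` map such products to products of the same shape with
`g` replaced by a combination of `g`, `g'`, `g''`, and in the Casimir all terms with `g'` and `g''`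
cancel. Since `Ψ_α` is entire, `F` is such a product in `x` (degree `k`) and, separately, in `y`
(degree `l`), so `π(Ω_{o_p}) F = k(k + p - 2) F` and `π(Ω_{o_q}) F = l(l + q - 2) F`; together with
the assumed action of `π(Ω_g)`, the eigenvalue is an algebraic identity.
-/

open Filter FormalMultilinearSeries

def psiCoeff (α : ℝ) (j : ℕ) : ℝ :=
  (-1) ^ j / ((j.factorial : ℝ) * (ascPochhammer ℝ j).eval α)

lemma Psi_eq_ofScalarsSum (α : ℝ) : Psi α = ofScalarsSum (psiCoeff α) := by
  ext u
  simp [Psi, ofScalars_sum_eq, psiCoeff]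

-- Valid for every `α` thanks to `x / 0 = 0`: both sides vanish once `(α)ⱼ₊₁ = 0`.
lemma psiCoeff_succ (α : ℝ) (j : ℕ) :
    psiCoeff α (j + 1) = -psiCoeff α j / ((j + 1) * (α + j)) := by
  simp only [psiCoeff, pow_succ, Nat.factorial_succ, ascPochhammer_succ_eval, Nat.cast_mul,
    Nat.cast_succ, div_eq_mul_inv, mul_inv]
  ring

lemma radius_ofScalars_psiCoeff (α : ℝ) : (ofScalars ℝ (psiCoeff α)).radius = ⊤ := by
  refine radius_eq_top_of_summable_norm _ fun r => ?_
  have hgrow : Tendsto (fun j : ℕ => ((j : ℝ) + 1) * |α + j|) atTop atTop :=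
    (tendsto_atTop_add_const_right _ 1 tendsto_natCast_atTop_atTop).atTop_mul_atTop₀
      (tendsto_abs_atTop_atTop.comp (tendsto_atTop_add_const_left _ α tendsto_natCast_atTop_atTop))
  have hsmall : ∀ᶠ j : ℕ in atTop, (r : ℝ) / (((j : ℝ) + 1) * |α + j|) ≤ 1 / 2 :=
    (tendsto_const_nhds.div_atTop hgrow).eventually (ge_mem_nhds (by norm_num))
  refine summable_of_ratio_norm_eventually_le (r := 1 / 2) (by norm_num) ?_
  filter_upwards [hsmall] with j hj
  simp only [ofScalars_norm, norm_mul, norm_pow, psiCoeff_succ, norm_div, norm_neg,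
    Real.norm_eq_abs, abs_abs, NNReal.abs_eq, abs_of_pos (Nat.cast_add_one_pos (α := ℝ) j)]
  calc |psiCoeff α j| / ((j + 1) * |α + j|) * r ^ (j + 1)
      = |psiCoeff α j| * r ^ j * (r / ((j + 1) * |α + j|)) := by ring
    _ ≤ 1 / 2 * (|psiCoeff α j| * r ^ j) := by
      rw [mul_comm (1 / 2 : ℝ)]
      exact mul_le_mul_of_nonneg_left hj (by positivity)

lemma contDiff_Psi (α : ℝ) {n : WithTop ℕ∞} : ContDiff ℝ n (Psi α) := by
  have h := (ofScalars ℝ (psiCoeff α)).hasFPowerSeriesOnBall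
    (by simp [radius_ofScalars_psiCoeff])
  rw [radius_ofScalars_psiCoeff] at h
  rw [Psi_eq_ofScalarsSum, ofScalarsSum]
  exact AnalyticOnNhd.contDiff (by simpa using h.analyticOnNhd)

namespace OrthogonalCasimir

variable {n : ℕ}

def partialDeriv (i : Fin n) (f : (Fin n → ℝ) → ℝ) : (Fin n → ℝ) → ℝ :=
  fun x => fderiv ℝ f x (Pi.single i 1)

def euler (f : (Fin n → ℝ) → ℝ) : (Fin n → ℝ) → ℝ :=
  fun x => ∑ i, x i * partialDeriv i f x

def laplacian (f : (Fin n → ℝ) → ℝ) : (Fin n → ℝ) → ℝ :=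
  fun x => ∑ i, partialDeriv i (partialDeriv i f) x

def casimir (f : (Fin n → ℝ) → ℝ) : (Fin n → ℝ) → ℝ :=
  fun x => euler (euler f) x + ((n : ℝ) - 2) * euler f x - (∑ i, x i ^ 2) * laplacian f x

lemma partialDeriv_add {f g : (Fin n → ℝ) → ℝ} {x : Fin n → ℝ} (i : Fin n)
    (hf : DifferentiableAt ℝ f x) (hg : DifferentiableAt ℝ g x) :
    partialDeriv i (fun v => f v + g v) x = partialDeriv i f x + partialDeriv i g x := by
  simp [partialDeriv, fderiv_fun_add hf hg]

lemma partialDeriv_mul {f g : (Fin n → ℝ) → ℝ} {x : Fin n → ℝ} (i : Fin n)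
    (hf : DifferentiableAt ℝ f x) (hg : DifferentiableAt ℝ g x) :
    partialDeriv i (fun v => f v * g v) x =
      partialDeriv i f x * g x + f x * partialDeriv i g x := by
  simp only [partialDeriv, fderiv_fun_mul hf hg, _root_.add_apply, _root_.smul_apply, smul_eq_mul]
  ring

lemma partialDeriv_comp {f : (Fin n → ℝ) → ℝ} {g : ℝ → ℝ} {x : Fin n → ℝ} (i : Fin n)
    (hf : DifferentiableAt ℝ f x) (hg : DifferentiableAt ℝ g (f x)) :
    partialDeriv i (fun v => g (f v)) x = deriv g (f x) * partialDeriv i f x := by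
  rw [partialDeriv, partialDeriv, show (fun v => g (f v)) = g ∘ f from rfl,
    (hg.hasDerivAt.comp_hasFDerivAt x hf.hasFDerivAt).fderiv]
  simp

lemma differentiable_eval (P : MvPolynomial (Fin n) ℝ) :
    Differentiable ℝ fun v : Fin n → ℝ => eval v P := by
  induction P using MvPolynomial.induction_on with
  | C a => simp
  | add P Q hP hQ => simpa using hP.fun_add hQ
  | mul_X P j hP => simpa using hP.fun_mul (differentiable_apply j)

lemma partialDeriv_eval (i : Fin n) (P : MvPolynomial (Fin n) ℝ) (x : Fin n → ℝ) :
    partialDeriv i (fun v => eval v P) x = eval x (pderiv i P) := by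
  induction P using MvPolynomial.induction_on with
  | C a => simp [partialDeriv]
  | add P Q hP hQ =>
    simp only [map_add]
    rw [partialDeriv_add i (differentiable_eval P x) (differentiable_eval Q x), hP, hQ]
  | mul_X P j hP =>
    simp only [eval_mul, eval_X]
    rw [partialDeriv_mul i (differentiable_eval P x) (differentiable_apply j x), hP, partialDeriv,
      (hasFDerivAt_apply j x).fderiv]
    by_cases hji : j = i
    · subst hji
      simp only [ContinuousLinearMap.proj_apply, Pi.single_eq_same, mul_one, Derivation.leibniz,
        pderiv_X, smul_eq_mul, map_add, map_mul, eval_X]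
      ring
    · simp only [ContinuousLinearMap.proj_apply, ne_eq, hji, not_false_eq_true,
        Pi.single_eq_of_ne, mul_zero, add_zero, Derivation.leibniz, pderiv_X, smul_eq_mul,
        zero_add, map_mul, eval_X]
      ring

lemma differentiable_rhoX : Differentiable ℝ (rhoX : (Fin n → ℝ) → ℝ) := by
  unfold rhoX; fun_prop

lemma sum_sq_eq_two_mul_rhoX (x : Fin n → ℝ) : ∑ i, x i ^ 2 = 2 * rhoX x := by
  rw [rhoX]; ring

lemma partialDeriv_rhoX (i : Fin n) (x : Fin n → ℝ) : partialDeriv i rhoX x = x i := by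
  have h : (rhoX : (Fin n → ℝ) → ℝ) = fun v => eval v (∑ j, C (1 / 2 : ℝ) * X j ^ 2) := by
    funext v; simp [rhoX, div_eq_inv_mul, Finset.mul_sum]
  rw [h, partialDeriv_eval]
  simp [pderiv_X, Pi.single_apply]

lemma eval_sum_mul_pderiv {d : ℕ} {Q : MvPolynomial (Fin n) ℝ} (hQ : Q.IsHomogeneous d)
    (x : Fin n → ℝ) : ∑ i, x i * eval x (pderiv i Q) = d * eval x Q := by
  simpa using congrArg (eval x) hQ.sum_X_mul_pderiv

def polyRadial (Q : MvPolynomial (Fin n) ℝ) (g : ℝ → ℝ) : (Fin n → ℝ) → ℝ :=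
  fun v => eval v Q * g (rhoX v)

variable {Q : MvPolynomial (Fin n) ℝ} {g : ℝ → ℝ}

lemma differentiable_polyRadial (hg : Differentiable ℝ g) : Differentiable ℝ (polyRadial Q g) :=
  (differentiable_eval Q).fun_mul (hg.comp differentiable_rhoX)

lemma partialDeriv_polyRadial (i : Fin n) (hg : Differentiable ℝ g) :
    partialDeriv i (polyRadial Q g) =
      fun v => polyRadial (pderiv i Q) g v + polyRadial (X i * Q) (deriv g) v := by
  funext x
  have hG : DifferentiableAt ℝ (fun v => g (rhoX v)) x := (hg _).comp x (differentiable_rhoX x)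
  change partialDeriv i (fun v => eval v Q * g (rhoX v)) x = _
  rw [partialDeriv_mul i (differentiable_eval Q x) hG, partialDeriv_eval,
    partialDeriv_comp i (differentiable_rhoX x) (hg _), partialDeriv_rhoX]
  simp only [polyRadial, eval_mul, eval_X]
  ring

lemma euler_polyRadial {d : ℕ} (hQ : Q.IsHomogeneous d) (hg : Differentiable ℝ g) :
    euler (polyRadial Q g) = polyRadial Q (fun t => d * g t + 2 * t * deriv g t) := by
  funext x
  simp only [euler, partialDeriv_polyRadial _ hg, polyRadial, eval_mul, eval_X, mul_add,
    Finset.sum_add_distrib, ← mul_assoc, ← Finset.sum_mul, eval_sum_mul_pderiv hQ, ← sq,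
    sum_sq_eq_two_mul_rhoX]
  ring

lemma laplacian_polyRadial {d : ℕ} (hQ : Q.IsHomogeneous d) (hharm : lapP Q = 0)
    (hg : Differentiable ℝ g) (hg' : Differentiable ℝ (deriv g)) :
    laplacian (polyRadial Q g) =
      polyRadial Q (fun t => (2 * d + n) * deriv g t + 2 * t * deriv (deriv g) t) := by
  funext x
  have h : ∀ i, partialDeriv i (partialDeriv i (polyRadial Q g)) x =
      polyRadial (pderiv i (pderiv i Q)) g x + polyRadial (X i * pderiv i Q) (deriv g) x +
        (polyRadial (pderiv i (X i * Q)) (deriv g) x +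
          polyRadial (X i * (X i * Q)) (deriv (deriv g)) x) := by
    intro i
    rw [partialDeriv_polyRadial i hg, partialDeriv_add i (differentiable_polyRadial hg x)
      (differentiable_polyRadial hg' x), partialDeriv_polyRadial i hg,
      partialDeriv_polyRadial i hg']
  have hlap : ∑ i, eval x (pderiv i (pderiv i Q)) = 0 := by
    simpa [lapP] using congrArg (eval x) hharm
  have hsq : ∑ i, x i * (x i * eval x Q) = 2 * rhoX x * eval x Q := by
    simp_rw [← mul_assoc, ← sq, ← Finset.sum_mul, sum_sq_eq_two_mul_rhoX]
  simp only [laplacian, h, polyRadial, pderiv_mul, pderiv_X_self, eval_mul, eval_X, map_add,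
    one_mul, Finset.sum_add_distrib, ← Finset.sum_mul, eval_sum_mul_pderiv hQ, hlap, hsq,
    Finset.sum_const, Finset.card_univ, Fintype.card_fin, nsmul_eq_mul]
  ring

lemma casimir_polyRadial {d : ℕ} (hQ : Q.IsHomogeneous d) (hharm : lapP Q = 0)
    (hg : Differentiable ℝ g) (hg' : Differentiable ℝ (deriv g)) (x : Fin n → ℝ) :
    casimir (polyRadial Q g) x = d * (d + n - 2) * polyRadial Q g x := by
  have hd : ∀ t, deriv (fun t => d * g t + 2 * t * deriv g t) t =
      (d + 2) * deriv g t + 2 * t * deriv (deriv g) t := by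
    intro t
    have h : HasDerivAt (fun t => d * g t + 2 * t * deriv g t)
        (d * deriv g t + (2 * 1 * deriv g t + 2 * t * deriv (deriv g) t)) t :=
      ((hg t).hasDerivAt.const_mul (d : ℝ)).add
        (((hasDerivAt_id t).const_mul 2).mul (hg' t).hasDerivAt)
    rw [h.deriv]
    ring
  have hg₁ : Differentiable ℝ fun t => d * g t + 2 * t * deriv g t := by fun_prop
  rw [casimir, euler_polyRadial hQ hg, euler_polyRadial hQ hg₁,
    laplacian_polyRadial hQ hharm hg hg']
  simp only [polyRadial, hd, sum_sq_eq_two_mul_rhoX]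
  ring

lemma OmOp_eq_casimir {p q : ℕ} (F : (Fin p → ℝ) → (Fin q → ℝ) → ℝ) (x : Fin p → ℝ)
    (y : Fin q → ℝ) : OmOp F x y = casimir (fun x' => F x' y) x :=
  rfl

lemma OmOq_eq_casimir {p q : ℕ} (F : (Fin p → ℝ) → (Fin q → ℝ) → ℝ) (x : Fin p → ℝ)
    (y : Fin q → ℝ) : OmOq F x y = casimir (F x) y :=
  rfl

lemma casimir_polyRadial_of_contDiff {d : ℕ} (hQ : Q.IsHomogeneous d) (hharm : lapP Q = 0)
    (hg : ContDiff ℝ 2 g) (x : Fin n → ℝ) :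
    casimir (polyRadial Q g) x = d * (d + n - 2) * polyRadial Q g x :=
  casimir_polyRadial hQ hharm (hg.differentiable two_ne_zero)
    ((contDiff_succ_iff_deriv.1 hg).2.2.differentiable one_ne_zero) x

end OrthogonalCasimir

open OrthogonalCasimir

lemma casimir_eigenvalues_combine (p q k l m : ℕ) :
    (k : ℝ) * (k + p - 2) - l * (l + q - 2) -
        ((p : ℝ) - q) / (p + q) * (m * (m + 2) - ((p : ℝ) + q) ^ 2 / 4 + (p + q)) =
      (k + p / 2 - (l + q / 2)) * (k + p / 2 + (l + q / 2) - 2) -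
        ((p : ℝ) - q) / (p + q) * (m * (m + 2)) := by
  rcases Nat.eq_zero_or_pos (p + q) with hpq | hpq
  · obtain ⟨rfl, rfl⟩ : p = 0 ∧ q = 0 := by omega
    simp only [Nat.cast_zero]
    ring
  · have : (p : ℝ) + q ≠ 0 := by exact_mod_cast hpq.ne'
    field_simp
    ring

theorem Xi_eigenvalue_general (p q k l m μ : ℕ)
    (h₁ : MvPolynomial (Fin p) ℝ) (h₂ : MvPolynomial (Fin q) ℝ)
    (hh₁ : h₁.IsHomogeneous k) (hharm₁ : lapP h₁ = 0)
    (hh₂ : h₂.IsHomogeneous l) (hharm₂ : lapP h₂ = 0) :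
    let κp : ℝ := (k : ℝ) + (p : ℝ) / 2
    let κm : ℝ := (l : ℝ) + (q : ℝ) / 2
    let F : (Fin p → ℝ) → (Fin q → ℝ) → ℝ :=
      fun x y => eval x h₁ * eval y h₂ * rhoY y ^ μ * Psi κp (rhoX x * rhoY y)
    let lam : ℝ := (κp - κm) * (κp + κm - 2) - (((p : ℝ) - q) / ((p : ℝ) + q)) * (m * (m + 2))
    (∀ (x : Fin p → ℝ) (y : Fin q → ℝ),
        OmG F x y = ((m : ℝ) * (m + 2) - ((p : ℝ) + q) ^ 2 / 4 + ((p : ℝ) + q)) * F x y) →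
    ((∀ (x : Fin p → ℝ) (y : Fin q → ℝ),
        OmOp F x y - OmOq F x y - (((p : ℝ) - q) / ((p : ℝ) + q)) * OmG F x y = lam * F x y) ∧
      (m = 0 → κp = κm → lam = 0)) := by
  intro κp κm F lam hOmG
  have hPsi : ContDiff ℝ 2 (Psi κp) := contDiff_Psi κp
  have hOp : ∀ x y, OmOp F x y = k * (k + p - 2) * F x y := fun x y => by
    have hF : (fun x' => F x' y) =
        polyRadial h₁ fun t => eval y h₂ * rhoY y ^ μ * Psi κp (t * rhoY y) := by
      funext x'
      simp only [polyRadial, F]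
      ring
    rw [OmOp_eq_casimir, hF, casimir_polyRadial_of_contDiff hh₁ hharm₁ (by fun_prop), ← hF]
  have hOq : ∀ x y, OmOq F x y = l * (l + q - 2) * F x y := fun x y => by
    have hF : F x = polyRadial h₂ fun t => eval x h₁ * t ^ μ * Psi κp (rhoX x * t) := by
      funext y'
      simp only [polyRadial, F, rhoY, rhoX]
      ring
    rw [OmOq_eq_casimir, hF, casimir_polyRadial_of_contDiff hh₂ hharm₂ (by fun_prop), ← hF]
  refine ⟨fun x y => ?_, fun hm hκ => ?_⟩
  · rw [hOp, hOq, hOmG]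
    linear_combination F x y * casimir_eigenvalues_combine p q k l m
  · simp [lam, hm, hκ]

/-- Ξ̂ = π(Ω_{o_p}) - π(Ω_{o_q}) - ((p-q)/(p+q))π(Ω_g) acts on
f = h₁h₂ρ_y^μΨ_{κ₊}(ρ_xρ_y) by the scalar
(κ₊-κ₋)(κ₊+κ₋-2) - ((p-q)/(p+q))·m(m+2); the scalar vanishes when m = 0. -/
theorem Xi_eigenvalue (p q k l m μ : ℕ)
    (h₁ : MvPolynomial (Fin p) ℝ) (h₂ : MvPolynomial (Fin q) ℝ)
    (hh₁ : h₁.IsHomogeneous k) (hharm₁ : lapP h₁ = 0)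
    (hh₂ : h₂.IsHomogeneous l) (hharm₂ : lapP h₂ = 0)
    (hμ : (μ : ℝ) = ((m : ℝ) + ((k : ℝ) + (p : ℝ) / 2) - ((l : ℝ) + (q : ℝ) / 2)) / 2) :
    let κp : ℝ := (k : ℝ) + (p : ℝ) / 2
    let κm : ℝ := (l : ℝ) + (q : ℝ) / 2
    let F : (Fin p → ℝ) → (Fin q → ℝ) → ℝ :=
      fun x y => eval x h₁ * eval y h₂ * rhoY y ^ μ * Psi κp (rhoX x * rhoY y)
    let lam : ℝ := (κp - κm) * (κp + κm - 2) - (((p : ℝ) - q) / ((p : ℝ) + q)) * (m * (m + 2))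
    (∀ (x : Fin p → ℝ) (y : Fin q → ℝ),
        OmG F x y = ((m : ℝ) * (m + 2) - ((p : ℝ) + q) ^ 2 / 4 + ((p : ℝ) + q)) * F x y) →
    ((∀ (x : Fin p → ℝ) (y : Fin q → ℝ),
        OmOp F x y - OmOq F x y - (((p : ℝ) - q) / ((p : ℝ) + q)) * OmG F x y = lam * F x y) ∧
      (m = 0 → κp = κm → lam = 0)) :=
  Xi_eigenvalue_general p q k l m μ h₁ h₂ hh₁ hharm₁ hh₂ hharm₂
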